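/- arXiv:2307.14872 — 6 statements merged into one kernel-verified Lean document; each statement's English description precedes it below -/
import Mathlib

section
/- Let q ≥ 2 be a real number and let p ∈ (0,1) with p ≤ q^{-k} for some positive integer k, where p is a product p = ∏_{i=1}^k p_i with each p_i ∈ (0, 1/q]. Then ∏_{i=1}^k (2 p_i - p_i^2) ≤ p^{2/(2+ζ)}, where ζ = 2 ln(2 - 1/q) / (ln q - ln(2 - 1/q)). -/
/-!
Writing `x = q^{-s}` with `s ≥ 1`, the factor `2x - x²` becomes `x (2 - q^{-s})`, while
`x^{2/(2+ζ)} = x^{1 - ln(2 - 1/q)/ln q} = x (2 - 1/q)^s`. So it suffices that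
`2 - q^{-s} ≤ (2 - 1/q)^s`: Bernoulli bounds the right side below by `1 + s (1 - 1/q)`, and the
tangent line of the convex function `s ↦ q^{-s}` at `s = 1` has slope `-ln q / q ≥ -(1 - 1/q)`.
The inequality for the product follows factor by factor.
-/

open Real

lemma one_sub_rpow_neg_le {q s : ℝ} (hq : 0 < q) (hs : 1 ≤ s) :
    1 - q ^ (-s) ≤ s * (1 - q⁻¹) := by
  have h_split : q ^ (-s) = q⁻¹ * exp (-((s - 1) * log q)) := by
    rw [rpow_def_of_pos hq, ← exp_log (inv_pos.2 hq), ← exp_add, log_inv]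
    ring_nf
  have h_tangent : 1 - (s - 1) * (q - 1) ≤ exp (-((s - 1) * log q)) := by
    have := mul_le_mul_of_nonneg_left (log_le_sub_one_of_pos hq) (sub_nonneg.2 hs)
    linarith [add_one_le_exp (-((s - 1) * log q))]
  have h_lower : q⁻¹ * (1 - (s - 1) * (q - 1)) ≤ q ^ (-s) :=
    h_split ▸ mul_le_mul_of_nonneg_left h_tangent (inv_nonneg.2 hq.le)
  have h_expand : q⁻¹ * (1 - (s - 1) * (q - 1)) = 1 - s * (1 - q⁻¹) := by
    field_simp
    ring
  linarith

lemma two_sub_rpow_neg_le {q s : ℝ} (hq : 1 ≤ q) (hs : 1 ≤ s) :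
    2 - q ^ (-s) ≤ (2 - q⁻¹) ^ s := by
  have h_inv : q⁻¹ ≤ 1 := inv_le_one_of_one_le₀ hq
  have h_bernoulli := one_add_mul_self_le_rpow_one_add (by linarith : -1 ≤ 1 - q⁻¹) hs
  rw [show 1 + (1 - q⁻¹) = 2 - q⁻¹ by ring] at h_bernoulli
  linarith [one_sub_rpow_neg_le (by linarith : (0 : ℝ) < q) hs]

lemma two_mul_sub_sq_le_rpow {q x : ℝ} (hq : 1 < q) (hx : 0 < x) (hxq : x ≤ q⁻¹) :
    2 * x - x ^ 2 ≤ x ^ ((log q - log (2 - q⁻¹)) / log q) := by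
  have hlogq : 0 < log q := log_pos hq
  have hb : 0 < 2 - q⁻¹ := by linarith [inv_lt_one_of_one_lt₀ hq]
  set s := -log x / log q
  have hs : 1 ≤ s := by
    have := log_le_log hx hxq
    rw [log_inv] at this
    rw [le_div_iff₀ hlogq]
    linarith
  have hx_eq : q ^ (-s) = x := by
    rw [rpow_def_of_pos (by linarith), ← exp_log hx]
    congr 1
    simp only [s]
    field_simp
  have h_rpow : x ^ ((log q - log (2 - q⁻¹)) / log q) = x * (2 - q⁻¹) ^ s := by
    rw [rpow_def_of_pos hx, rpow_def_of_pos hb]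
    nth_rewrite 2 [← exp_log hx]
    rw [← exp_add]
    congr 1
    simp only [s]
    field_simp
    ring
  calc 2 * x - x ^ 2 = x * (2 - q ^ (-s)) := by rw [hx_eq]; ring
    _ ≤ x * (2 - q⁻¹) ^ s :=
      mul_le_mul_of_nonneg_left (two_sub_rpow_neg_le hq.le hs) hx.le
    _ = _ := h_rpow.symm

lemma two_div_two_add_two_mul_div_sub {Q L : ℝ} (h : L ≠ Q) :
    2 / (2 + 2 * L / (Q - L)) = (Q - L) / Q := by
  have h_ne : Q - L ≠ 0 := sub_ne_zero.2 h.symm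
  rw [show 2 + 2 * L / (Q - L) = 2 * Q / (Q - L) by field_simp; ring]
  field_simp

theorem stmt1_general (q : ℝ) (hq : 2 ≤ q) (k : ℕ) (p : ℕ → ℝ)
    (hp : ∀ i ∈ Finset.range k, 0 < p i ∧ p i ≤ 1 / q) :
    (∏ i ∈ Finset.range k, (2 * p i - (p i) ^ 2)) ≤
      (∏ i ∈ Finset.range k, p i) ^
        (2 / (2 + 2 * Real.log (2 - 1 / q) / (Real.log q - Real.log (2 - 1 / q)))) := by
  simp only [one_div] at hp ⊢
  have hq_inv : q⁻¹ < 1 := inv_lt_one_of_one_lt₀ (by linarith)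
  have hq_inv_pos : 0 < q⁻¹ := by positivity
  have h_log_ne : log (2 - q⁻¹) ≠ log q :=
    (log_lt_log (by linarith) (by linarith)).ne
  rw [two_div_two_add_two_mul_div_sub h_log_ne,
    ← Real.finsetProd_rpow _ _ fun i hi ↦ (hp i hi).1.le]
  refine Finset.prod_le_prod (fun i hi ↦ ?_) (fun i hi ↦ ?_)
  · nlinarith [hp i hi]
  · exact two_mul_sub_sq_le_rpow (by linarith) (hp i hi).1 (hp i hi).2

theorem stmt1 (q : ℝ) (hq : 2 ≤ q) (k : ℕ) (hk : 1 ≤ k) (p : ℕ → ℝ)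
    (hp : ∀ i ∈ Finset.range k, 0 < p i ∧ p i ≤ 1 / q) :
    (∏ i ∈ Finset.range k, (2 * p i - (p i) ^ 2)) ≤
      (∏ i ∈ Finset.range k, p i) ^
        (2 / (2 + 2 * Real.log (2 - 1 / q) / (Real.log q - Real.log (2 - 1 / q)))) :=
  stmt1_general q hq k p hp
end

section
/- For any real x ∈ (0, 1/q] with q ≥ 2 real, it holds that ln(2x - x^2) / ln x ≥ 2 - ln(2q - 1)/ln q. -/
theorem stmt2 (q x : ℝ) (hq : 2 ≤ q) (hx : 0 < x) (hx2 : x ≤ 1 / q) :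
    2 - Real.log (2 * q - 1) / Real.log q ≤ Real.log (2 * x - x ^ 2) / Real.log x := by
  have hq0 : (0:ℝ) < q := by linarith
  have hq1 : (1:ℝ) < q := by linarith
  have hB : 0 < Real.log q := Real.log_pos hq1
  have hx1 : x < 1 := lt_of_le_of_lt hx2 (by rw [div_lt_one hq0]; linarith)
  have hA : Real.log x < 0 := Real.log_neg hx hx1
  set A := Real.log x with hAdef
  set B := Real.log q with hBdef
  set u := -A / B with hudef
  have huB : u * B = -A := div_mul_cancel₀ _ (ne_of_gt hB)
  have hu1 : 1 ≤ u := by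
    rw [hudef, le_div_iff₀ hB]
    have h1 : Real.log x ≤ Real.log (1 / q) := Real.log_le_log hx hx2
    rw [Real.log_div one_ne_zero (ne_of_gt hq0), Real.log_one] at h1
    linarith
  have hxq : x = q ^ (-u) := by
    rw [Real.rpow_def_of_pos hq0]
    have h3 : Real.log q * -u = A := by rw [← hBdef]; linarith [huB]
    rw [h3, hAdef, Real.exp_log hx]
  -- convexity : q ^ u ≤ (1 + (2q-1)^u)/2
  have hconv := (convexOn_rpow (le_trans (le_refl 1) hu1)).2
    (Set.mem_Ici.mpr (by norm_num : (0:ℝ) ≤ 1))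
    (Set.mem_Ici.mpr (by linarith : (0:ℝ) ≤ 2*q-1))
    (by norm_num : (0:ℝ) ≤ (1:ℝ)/2) (by norm_num : (0:ℝ) ≤ (1:ℝ)/2) (by norm_num)
  have hmid : (1/2 : ℝ) • (1:ℝ) + (1/2 : ℝ) • (2*q-1) = q := by
    simp [smul_eq_mul]; ring
  rw [hmid] at hconv
  simp only [smul_eq_mul, Real.one_rpow] at hconv
  -- hconv : q ^ u ≤ 1/2 * 1 + 1/2 * (2q-1)^u
  have hqu : 0 < q ^ u := Real.rpow_pos_of_pos hq0 u
  have hkey : 2 - x ≤ ((2*q-1)/q) ^ u := by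
    rw [Real.div_rpow (by linarith) (le_of_lt hq0)]
    rw [hxq, Real.rpow_neg (le_of_lt hq0)]
    rw [le_div_iff₀ hqu, sub_mul, inv_mul_cancel₀ (ne_of_gt hqu)]
    nlinarith [hconv]
  -- take logs
  have h2x1 : (1:ℝ) ≤ 2 - x := by linarith
  have hD : Real.log (2 - x) ≤ u * (Real.log (2*q-1) - B) := by
    have := Real.log_le_log (by linarith : (0:ℝ) < 2 - x) hkey
    rwa [Real.log_rpow (div_pos (by linarith) hq0),
      Real.log_div (by linarith : (2*q-1) ≠ 0) (ne_of_gt hq0)] at this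
  set C := Real.log (2*q-1) with hCdef
  set D := Real.log (2 - x) with hDdef
  have hDB : D * B ≤ -A * (C - B) := by
    have := mul_le_mul_of_nonneg_right hD (le_of_lt hB)
    calc D * B ≤ u * (C - B) * B := this
      _ = u * B * (C - B) := by ring
      _ = -A * (C - B) := by rw [huB]
  have hlog2x : Real.log (2*x - x^2) = A + D := by
    have : 2*x - x^2 = x * (2 - x) := by ring
    rw [this, Real.log_mul (ne_of_gt hx) (by linarith : (2:ℝ) - x ≠ 0)]
  rw [hlog2x, le_div_iff_of_neg hA]
  have heq : (2 - C / B) * A = (2 * B * A - C * A) / B := by field_simp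
  rw [heq, le_div_iff₀ hB]
  nlinarith [hDB]
end

section
/- Let G be a graph with maximum degree at most d ≥ 1, and let v be a vertex of G. Then the number of 2-trees in G of size ℓ ≥ 1 containing v is at most (e·d²)^{ℓ-1} / 2 · 2, i.e., at most (e·d²)^{ℓ-1}. -/
/-- The auxiliary "distance-2" graph: two vertices are adjacent iff their
distance in `G` is exactly 2. -/
def auxGraph {V : Type*} (G : SimpleGraph V) : SimpleGraph V :=
  SimpleGraph.fromRel (fun u v => G.dist u v = 2)

/-- A 2-tree in `G`: a finite set of vertices pairwise at distance at least 2,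
connected in the auxiliary distance-2 graph. -/
def IsTwoTree {V : Type*} (G : SimpleGraph V) (T : Finset V) : Prop :=
  (∀ u ∈ T, ∀ v ∈ T, u ≠ v → 2 ≤ G.dist u v) ∧
  (SimpleGraph.induce (T : Set V) (auxGraph G)).Connected

/-! A 2-tree is a connected vertex set of the distance-two graph `auxGraph G`, whose degrees
are at most `d ^ 2`, so it suffices to count connected sets in a graph of maximum degree `D`.
List such a set of size `k + 1` starting from its root. Every later vertex is adjacent to one
strictly closer to the root in the induced graph, so the list is recovered, by induction on
that distance, from the position of such a parent in the list and the vertex's label among the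
parent's at most `D` neighbours. Each set has `k !` lists, whence
`#sets * k ! ≤ ((k + 1) * D) ^ k ≤ (e * D) ^ k * k !`, using `(k + 1) ^ k ≤ e ^ k * k !`. -/

open Finset Function Real

lemma add_one_pow_le_exp_pow_mul_factorial (k : ℕ) :
    ((k : ℝ) + 1) ^ k ≤ exp 1 ^ k * k.factorial := by
  induction k with
  | zero => simp
  | succ k ih =>
    have he : (1 + ((k + 1 : ℕ) : ℝ)⁻¹) ^ (k + 1) ≤ exp 1 := one_add_inv_pow_le_exp
    push_cast at he ⊢
    calc ((k : ℝ) + 1 + 1) ^ (k + 1) = ((k + 1) * (1 + (k + 1 : ℝ)⁻¹)) ^ (k + 1) := by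
          congr 1; field_simp
      _ ≤ (k + 1) * (k + 1) ^ k * exp 1 := by rw [mul_pow, pow_succ']; gcongr
      _ ≤ (k + 1) * (exp 1 ^ k * k.factorial) * exp 1 := by gcongr
      _ = exp 1 ^ (k + 1) * (k + 1).factorial := by push_cast [Nat.factorial_succ]; ring

lemma Finset.factorial_le_card_enumerations {α : Type*} [Fintype α] [DecidableEq α] {k : ℕ}
    {T : Finset α} {v : α} (hv : v ∈ T) (hT : #T = k + 1) :
    k.factorial ≤ #{f : Fin (k + 1) → α | f 0 = v ∧ Injective f ∧ Set.range f = T} := by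
  have hcard : Fintype.card (T.erase v) = k := by
    rw [Fintype.card_coe, card_erase_of_mem hv, hT, Nat.add_sub_cancel]
  let e₀ : Fin k ≃ T.erase v := (Fintype.equivFinOfCardEq hcard).symm
  let enum : (Fin k ≃ T.erase v) → Fin (k + 1) → α := fun e => Fin.cons v fun i => (e i : α)
  calc k.factorial = #(univ : Finset (Fin k ≃ T.erase v)) := by
        rw [card_univ, Fintype.card_equiv e₀, Fintype.card_fin]
    _ ≤ _ := by
      refine card_le_card_of_injOn enum (fun e _ => ?_) (fun e _ e' _ h => ?_)
      · have hrange : Set.range (fun i => (e i : α)) = ↑(T.erase v) := by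
          change Set.range (Subtype.val ∘ e) = _
          rw [Set.range_comp, e.range_eq_univ, Set.image_univ, Subtype.range_val_subtype]
          rfl
        rw [mem_coe, mem_filter]
        refine ⟨mem_univ _, Fin.cons_zero _ _, Fin.cons_injective_iff.2 ⟨?_, ?_⟩, ?_⟩
        · simp [hrange]
        · exact Subtype.val_injective.comp e.injective
        · rw [Fin.range_cons, hrange, ← coe_insert, insert_erase hv]
      · ext i
        simpa [enum] using congrFun h i.succ

lemma Finset.exists_injOn_lt_of_card_le {α : Type*} {s : Finset α} {D : ℕ} (h : #s ≤ D) :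
    ∃ g : α → ℕ, Set.InjOn g s ∧ ∀ x ∈ s, g x < D := by
  classical
  refine ⟨fun x => if hx : x ∈ s then s.equivFin ⟨x, hx⟩ else 0, ?_, ?_⟩
  · intro x hx y hy hxy
    simp only [Finset.mem_coe] at hx hy
    simpa [hx, hy, Fin.val_inj] using hxy
  · intro x hx
    simpa [hx] using ((s.equivFin ⟨x, hx⟩).2.trans_le h)

lemma Fin.ext_of_parent {α : Type*} {k : ℕ} {f g : Fin (k + 1) → α} (p : Fin k → Fin (k + 1))
    (ρ : Fin (k + 1) → ℕ) (hρ : ∀ i, ρ (p i) < ρ i.succ) (h0 : f 0 = g 0)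
    (hstep : ∀ i, f (p i) = g (p i) → f i.succ = g i.succ) : f = g := by
  funext j
  induction hj : ρ j using Nat.strong_induction_on generalizing j with
  | _ n ih =>
    cases j using Fin.cases with
    | zero => exact h0
    | succ i => exact hstep i (ih _ (hj ▸ hρ i) _ rfl)

namespace SimpleGraph

variable {V : Type*} {G : SimpleGraph V}

lemma Connected.exists_adj_dist_lt (h : G.Connected) {x r : V} (hx : x ≠ r) :
    ∃ y, G.Adj x y ∧ G.dist y r < G.dist x r := by
  obtain ⟨p, hp⟩ := h.exists_walk_length_eq_dist x r
  have hnil : ¬p.Nil := fun hn => hx hn.eq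
  refine ⟨p.snd, p.adj_snd hnil, ?_⟩
  calc G.dist p.snd r ≤ p.tail.length := dist_le _
    _ < p.length := by rw [← p.length_tail_add_one hnil]; omega
    _ = G.dist x r := hp

lemma exists_adj_adj_of_dist_eq_two {u w : V} (h : G.dist u w = 2) :
    ∃ m, G.Adj u m ∧ G.Adj m w := by
  obtain ⟨p, hp⟩ := exists_walk_of_dist_ne_zero (h ▸ two_ne_zero : G.dist u w ≠ 0)
  rw [h] at hp
  match p, hp with
  | .cons hum (.cons hmw .nil), _ => exact ⟨_, hum, hmw⟩

lemma exists_parent_of_connected_induce_range {k : ℕ} {f : Fin (k + 1) → V} (hf : Injective f)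
    (hconn : (G.induce (Set.range f)).Connected) :
    ∃ (p : Fin k → Fin (k + 1)) (ρ : Fin (k + 1) → ℕ),
      ∀ i, ρ (p i) < ρ i.succ ∧ G.Adj (f (p i)) (f i.succ) := by
  let ρ j := (G.induce (Set.range f)).dist ⟨f j, j, rfl⟩ ⟨f 0, 0, rfl⟩
  have hparent : ∀ i : Fin k, ∃ j, ρ j < ρ i.succ ∧ G.Adj (f j) (f i.succ) := by
    intro i
    have hne : (⟨f i.succ, _, rfl⟩ : Set.range f) ≠ ⟨f 0, _, rfl⟩ :=
      fun h => i.succ_ne_zero (hf (congrArg Subtype.val h))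
    obtain ⟨⟨_, j, rfl⟩, hadj, hlt⟩ := hconn.exists_adj_dist_lt hne
    exact ⟨j, hlt, hadj.symm⟩
  choose p hp using hparent
  exact ⟨p, ρ, hp⟩

variable [Fintype V]

open Classical in
noncomputable def connectedFinsetsThrough (G : SimpleGraph V) (v : V) (n : ℕ) :
    Finset (Finset V) :=
  {T | v ∈ T ∧ #T = n ∧ (G.induce (T : Set V)).Connected}

open Classical in
noncomputable def connectedEnumerations (G : SimpleGraph V) (v : V) (k : ℕ) :
    Finset (Fin (k + 1) → V) :=
  {f | f 0 = v ∧ Injective f ∧ (G.induce (Set.range f)).Connected}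

lemma card_connectedFinsetsThrough_mul_factorial_le (v : V) (k : ℕ) :
    #(G.connectedFinsetsThrough v (k + 1)) * k.factorial ≤ #(G.connectedEnumerations v k) := by
  classical
  have hmaps : Set.MapsTo (fun f : Fin (k + 1) → V => image f univ)
      (G.connectedEnumerations v k : Set _) (G.connectedFinsetsThrough v (k + 1) : Set _) := by
    intro f hf
    simp only [connectedEnumerations, mem_coe, mem_filter, mem_univ, true_and] at hf
    obtain ⟨hf0, hinj, hconn⟩ := hf
    simp only [connectedFinsetsThrough, mem_coe, mem_filter, mem_univ, true_and]
    refine ⟨mem_image.2 ⟨0, mem_univ _, hf0⟩, ?_, ?_⟩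
    · rw [card_image_of_injective _ hinj, card_univ, Fintype.card_fin]
    · rwa [coe_image, coe_univ, Set.image_univ]
  rw [card_eq_sum_card_fiberwise hmaps, ← smul_eq_mul, ← sum_const]
  refine sum_le_sum fun T hT => ?_
  simp only [connectedFinsetsThrough, mem_filter, mem_univ, true_and] at hT
  obtain ⟨hv, hcard, hconn⟩ := hT
  refine (factorial_le_card_enumerations hv hcard).trans (card_le_card fun f hf => ?_)
  simp only [mem_filter, mem_univ, true_and] at hf
  obtain ⟨hf0, hinj, hrange⟩ := hf
  simp only [connectedEnumerations, mem_filter, mem_univ, true_and]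
  refine ⟨⟨hf0, hinj, hrange ▸ hconn⟩, coe_injective ?_⟩
  rw [coe_image, coe_univ, Set.image_univ, hrange]

lemma card_connectedEnumerations_le [DecidableRel G.Adj] {D : ℕ} (hdeg : ∀ u, G.degree u ≤ D)
    (v : V) (k : ℕ) : #(G.connectedEnumerations v k) ≤ ((k + 1) * D) ^ k := by
  classical
  choose label hlabel using fun u =>
    (G.neighborFinset u).exists_injOn_lt_of_card_le
      ((card_neighborFinset_eq_degree G u).trans_le (hdeg u))
  have hcode : ∀ f : G.connectedEnumerations v k, ∃ (c : Fin k → Fin (k + 1) × Fin D)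
      (ρ : Fin (k + 1) → ℕ), ∀ i, ρ (c i).1 < ρ i.succ ∧ G.Adj (f.1 (c i).1) (f.1 i.succ) ∧
        label (f.1 (c i).1) (f.1 i.succ) = (c i).2 := by
    rintro ⟨f, hf⟩
    simp only [connectedEnumerations, mem_filter, mem_univ, true_and] at hf
    obtain ⟨p, ρ, hp⟩ := exists_parent_of_connected_induce_range hf.2.1 hf.2.2
    exact ⟨fun i => (p i, ⟨_, (hlabel _).2 _ ((mem_neighborFinset ..).2 (hp i).2)⟩), ρ,
      fun i => ⟨(hp i).1, (hp i).2, rfl⟩⟩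
  choose c ρ hc using hcode
  have hzero : ∀ f : G.connectedEnumerations v k, f.1 0 = v := fun ⟨f, hf⟩ => by
    simp only [connectedEnumerations, mem_filter, mem_univ, true_and] at hf
    exact hf.1
  have hinj : Injective c := by
    intro f g hfg
    refine Subtype.ext (Fin.ext_of_parent _ (ρ f) (fun i => (hc f i).1)
      ((hzero f).trans (hzero g).symm) fun i hi => ?_)
    have hg := hc g i
    rw [← hfg, ← hi] at hg
    exact (hlabel _).1 ((mem_neighborFinset ..).2 (hc f i).2.1)
      ((mem_neighborFinset ..).2 hg.2.1) ((hc f i).2.2.trans hg.2.2.symm)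
  calc #(G.connectedEnumerations v k) = Fintype.card (G.connectedEnumerations v k) :=
        (Fintype.card_coe _).symm
    _ ≤ Fintype.card (Fin k → Fin (k + 1) × Fin D) := Fintype.card_le_of_injective c hinj
    _ = ((k + 1) * D) ^ k := by simp [Fintype.card_prod]

lemma card_connectedFinsetsThrough_le [DecidableRel G.Adj] {D : ℕ} (hdeg : ∀ u, G.degree u ≤ D)
    (v : V) (k : ℕ) : (#(G.connectedFinsetsThrough v (k + 1)) : ℝ) ≤ (exp 1 * D) ^ k := by
  have hcount :
      (#(G.connectedFinsetsThrough v (k + 1)) : ℝ) * k.factorial ≤ ((k + 1) * D) ^ k := by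
    exact_mod_cast (card_connectedFinsetsThrough_mul_factorial_le v k).trans
      (card_connectedEnumerations_le hdeg v k)
  refine le_of_mul_le_mul_right (hcount.trans ?_) (Nat.cast_pos.2 k.factorial_pos)
  calc ((k + 1) * D : ℝ) ^ k = (k + 1) ^ k * (D : ℝ) ^ k := mul_pow _ _ _
    _ ≤ exp 1 ^ k * k.factorial * (D : ℝ) ^ k := by
        gcongr; exact add_one_pow_le_exp_pow_mul_factorial k
    _ = (exp 1 * D) ^ k * k.factorial := by ring

end SimpleGraph

lemma auxGraph_degree_le {V : Type*} [Fintype V] {G : SimpleGraph V} [DecidableRel G.Adj]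
    [DecidableRel (auxGraph G).Adj] {d : ℕ} (hdeg : ∀ v, G.degree v ≤ d) (u : V) :
    (auxGraph G).degree u ≤ d ^ 2 := by
  classical
  rw [← SimpleGraph.card_neighborFinset_eq_degree]
  calc #((auxGraph G).neighborFinset u)
      ≤ #((G.neighborFinset u).biUnion fun m => G.neighborFinset m) := card_le_card fun w hw => by
        rw [SimpleGraph.mem_neighborFinset, auxGraph, SimpleGraph.fromRel_adj] at hw
        obtain ⟨m, hum, hmw⟩ := SimpleGraph.exists_adj_adj_of_dist_eq_two
          (hw.2.elim id fun h => (SimpleGraph.dist_comm).trans h)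
        exact mem_biUnion.2 ⟨m, (G.mem_neighborFinset _ _).2 hum, (G.mem_neighborFinset _ _).2 hmw⟩
    _ ≤ ∑ m ∈ G.neighborFinset u, #(G.neighborFinset m) := card_biUnion_le
    _ ≤ #(G.neighborFinset u) * d := sum_le_card_nsmul _ _ _ fun m _ =>
        (G.card_neighborFinset_eq_degree m).trans_le (hdeg m)
    _ ≤ d ^ 2 := by
        rw [sq]; gcongr; exact (G.card_neighborFinset_eq_degree u).trans_le (hdeg u)

theorem stmt3_general {V : Type*} [Fintype V] (G : SimpleGraph V)
    [DecidableRel G.Adj] (d ℓ : ℕ) (hdeg : ∀ v, G.degree v ≤ d)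
    (v : V) :
    (({T : Finset V | v ∈ T ∧ T.card = ℓ ∧ IsTwoTree G T}.ncard : ℝ)) ≤
      (Real.exp 1 * (d : ℝ) ^ 2) ^ (ℓ - 1) := by
  classical
  rcases ℓ with _ | k
  · have hempty : {T : Finset V | v ∈ T ∧ T.card = 0 ∧ IsTwoTree G T} = ∅ :=
      Set.eq_empty_of_forall_notMem fun T ⟨hv, hT, _⟩ => by simp [card_eq_zero.1 hT] at hv
    rw [hempty, Set.ncard_empty]; simp
  have hsub : {T : Finset V | v ∈ T ∧ T.card = k + 1 ∧ IsTwoTree G T} ⊆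
      (auxGraph G).connectedFinsetsThrough v (k + 1) := fun T ⟨hv, hT, htree⟩ => by
    simpa [SimpleGraph.connectedFinsetsThrough] using ⟨hv, hT, htree.2⟩
  calc ({T : Finset V | v ∈ T ∧ T.card = k + 1 ∧ IsTwoTree G T}.ncard : ℝ)
      ≤ #((auxGraph G).connectedFinsetsThrough v (k + 1)) := by
        rw [← Set.ncard_coe_finset]; exact_mod_cast Set.ncard_le_ncard hsub (Set.toFinite _)
    _ ≤ (exp 1 * (d ^ 2 : ℕ)) ^ k :=
        SimpleGraph.card_connectedFinsetsThrough_le (auxGraph_degree_le hdeg) v k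
    _ = (exp 1 * (d : ℝ) ^ 2) ^ (k + 1 - 1) := by push_cast; rfl

theorem stmt3 {V : Type*} [Fintype V] [DecidableEq V] (G : SimpleGraph V)
    [DecidableRel G.Adj] (d ℓ : ℕ) (hd : 1 ≤ d) (hdeg : ∀ v, G.degree v ≤ d)
    (hℓ : 1 ≤ ℓ) (v : V) :
    (({T : Finset V | v ∈ T ∧ T.card = ℓ ∧ IsTwoTree G T}.ncard : ℝ)) ≤
      (Real.exp 1 * (d : ℝ) ^ 2) ^ (ℓ - 1) :=
  stmt3_general G d ℓ hdeg v
end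

section
/- Let G be a graph with maximum degree at most d. Let H be a connected subgraph of G on vertex set V(H), and let v ∈ V(H). Then there exists a 2-tree T of G with v ∈ T ⊆ V(H) and |T| ≥ |V(H)| / (d + 1). -/
open SimpleGraph Finset

namespace SimpleGraph

variable {V : Type*} [DecidableEq V] (G : SimpleGraph V) [G.LocallyFinite]

def closedNeighborFinset (T : Finset V) : Finset V :=
  T.biUnion fun t => insert t (G.neighborFinset t)

variable {G}

lemma mem_closedNeighborFinset {T : Finset V} {x : V} :
    x ∈ G.closedNeighborFinset T ↔ ∃ t ∈ T, x = t ∨ G.Adj t x := by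
  simp [closedNeighborFinset]

lemma card_closedNeighborFinset_le {d : ℕ} (hdeg : ∀ v, G.degree v ≤ d) (T : Finset V) :
    #(G.closedNeighborFinset T) ≤ #T * (d + 1) :=
  calc #(G.closedNeighborFinset T)
      ≤ ∑ t ∈ T, #(insert t (G.neighborFinset t)) := card_biUnion_le
    _ ≤ ∑ _t ∈ T, (d + 1) := sum_le_sum fun t _ => (card_insert_le _ _).trans <| by
        rw [card_neighborFinset_eq_degree]; exact Nat.add_le_add_right (hdeg t) 1
    _ = #T * (d + 1) := by rw [sum_const, smul_eq_mul]

end SimpleGraph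

lemma isTwoTree_singleton {V : Type*} (G : SimpleGraph V) (v : V) : IsTwoTree G {v} := by
  refine ⟨by simp, ?_⟩
  rw [coe_singleton, induce_singleton_eq_top]
  exact connected_top

lemma IsTwoTree.insert {V : Type*} [DecidableEq V] {G : SimpleGraph V} {T : Finset V}
    (hT : IsTwoTree G T) {a t : V} (ht : t ∈ T) (hat : G.dist a t = 2)
    (hfar : ∀ t' ∈ T, 2 ≤ G.dist a t') : IsTwoTree G (insert a T) := by
  refine ⟨?_, ?_⟩
  · simp only [mem_insert]
    rintro u (rfl | hu) w (rfl | hw) hne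
    · exact absurd rfl hne
    · exact hfar w hw
    · rw [dist_comm]; exact hfar u hu
    · exact hT.1 u hu w hw hne
  · have hne : a ≠ t := by rintro rfl; simp at hat
    rw [coe_insert, Set.insert_eq]
    refine connected_induce_union (by simp [induce_singleton_eq_top]) hT.2.preconnected
      rfl ht ?_
    simp [auxGraph, hne, hat]

lemma exists_isTwoTree_subset_closedNeighborFinset {V : Type*} [Finite V] [DecidableEq V]
    (G : SimpleGraph V) [G.LocallyFinite] {S : Set V} (hconn : (G.induce S).Connected)
    {v : V} (hv : v ∈ S) :
    ∃ T : Finset V, IsTwoTree G T ∧ v ∈ T ∧ (T : Set V) ⊆ S ∧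
      S ⊆ G.closedNeighborFinset T := by
  obtain ⟨T, ⟨hT, hvT, hTS⟩, hmax⟩ := Set.Finite.exists_maximalFor Finset.card
    {T : Finset V | IsTwoTree G T ∧ v ∈ T ∧ (T : Set V) ⊆ S} (Set.toFinite _)
    ⟨{v}, isTwoTree_singleton G v, mem_singleton_self v, by simpa⟩
  refine ⟨T, hT, hvT, hTS, fun b hbS => ?_⟩
  by_contra hb
  obtain ⟨W⟩ := hconn ⟨v, hv⟩ ⟨b, hbS⟩
  obtain ⟨⟨⟨c, a⟩, hca⟩, -, hc, ha⟩ :=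
    W.exists_boundary_dart {x : S | (x : V) ∈ G.closedNeighborFinset T}
      (mem_closedNeighborFinset.2 ⟨v, hvT, Or.inl rfl⟩) hb
  simp only [Set.mem_ofPred_eq, mem_closedNeighborFinset, not_exists, not_and, not_or] at hc ha
  have hca : G.Adj c a := hca
  obtain ⟨t, htT, hct⟩ := hc
  have htc : G.Adj t c := hct.resolve_left fun h => (ha t htT).2 (h ▸ hca)
  -- `G.dist` is `0` between unreachable vertices, so reachability inside `G[S]` is needed here.
  have hfar : ∀ t' ∈ T, 2 ≤ G.dist a t' := fun t' ht' =>
    ((hconn a ⟨t', hTS ht'⟩).map (Embedding.induce S).toHom).one_lt_dist_of_ne_of_not_adj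
      (ha t' ht').1 fun h => (ha t' ht').2 h.symm
  have hat : G.dist a t = 2 :=
    le_antisymm (dist_le (.cons hca.symm (.cons htc.symm .nil))) (hfar t htT)
  have hgrow := hmax ⟨hT.insert htT hat hfar, mem_insert_of_mem hvT, by
    simpa using Set.insert_subset a.2 hTS⟩ (card_le_card (subset_insert _ _))
  rw [card_insert_of_notMem fun h => (ha a h).1 rfl] at hgrow
  omega

theorem stmt4 {V : Type*} [Fintype V] [DecidableEq V] (G : SimpleGraph V)
    [DecidableRel G.Adj] (d : ℕ) (hdeg : ∀ v, G.degree v ≤ d)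
    (S : Set V) (hconn : (SimpleGraph.induce S G).Connected) (v : V) (hv : v ∈ S) :
    ∃ T : Finset V, IsTwoTree G T ∧ v ∈ T ∧ (T : Set V) ⊆ S ∧
      (S.ncard : ℝ) / ((d : ℝ) + 1) ≤ (T.card : ℝ) := by
  obtain ⟨T, hT, hvT, hTS, hdom⟩ := exists_isTwoTree_subset_closedNeighborFinset G hconn hv
  refine ⟨T, hT, hvT, hTS, ?_⟩
  have hcount : S.ncard ≤ #T * (d + 1) :=
    calc S.ncard ≤ (G.closedNeighborFinset T : Set V).ncard := Set.ncard_le_ncard hdom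
      _ = #(G.closedNeighborFinset T) := Set.ncard_coe_finset _
      _ ≤ #T * (d + 1) := card_closedNeighborFinset_le hdeg T
  rw [div_le_iff₀ (by positivity)]
  exact_mod_cast hcount
end

section
/- Let μ and ν be probability distributions on a finite product space Ω = ∏_{v ∈ V} Q_v with V finite. Suppose for every pair of values i, j there exists a coupling of appropriate conditional distributions such that the expected Hamming distance is at most A. Concretely: if for each u ∈ V and i,j ∈ Q_u there is a coupling C of μ conditioned on u=i and μ conditioned on u=j with E[d_Ham(X,Y)] ≤ A, then the one-to-all total influence ∥Ψ_μ∥_∞ = max_u ∑_v max_{i,j} d_TV(μ^{u←i}_v, μ^{u←j}_v) is at most χ² · A, where χ = max_v |Q_v|. -/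
open Classical in
/-- The marginal distribution of coordinate `v` under `μ` conditioned on
coordinate `u` taking value `c`: `μ^{u←c}_v (j)`. -/
noncomputable def condMarg {V : Type*} [Fintype V] [DecidableEq V] {Q : V → Type*}
    [∀ v, Fintype (Q v)] (μ : (∀ v, Q v) → ℝ) (u : V) (c : Q u) (v : V)
    (j : Q v) : ℝ :=
  (∑ x : ∀ w, Q w, if x u = c ∧ x v = j then μ x else 0) /
    (∑ x : ∀ w, Q w, if x u = c then μ x else 0)

/-- Total variation distance between two mass functions on a finite type. -/
noncomputable def dTV {α : Type*} [Fintype α] (f g : α → ℝ) : ℝ :=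
  2⁻¹ * ∑ a : α, |f a - g a|

open Classical in
/-- If for every `u` and `i, j ∈ Q u` there is a coupling of `μ` conditioned on
`u = i` and `μ` conditioned on `u = j` with expected Hamming distance at most
`A`, then the one-to-all total influence of `μ` is at most `χ² · A`, where
`χ = max_v |Q v|`. -/
theorem stmt6 {V : Type*} [Fintype V] [DecidableEq V] {Q : V → Type*}
    [∀ v, Fintype (Q v)] [∀ v, DecidableEq (Q v)]
    (μ : (∀ v, Q v) → ℝ) (hnn : ∀ x, 0 ≤ μ x) (hprob : ∑ x : ∀ v, Q v, μ x = 1)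
    (hcard : ∀ v, 2 ≤ Fintype.card (Q v))
    (hpos : ∀ (u : V) (i : Q u), 0 < ∑ x : ∀ w, Q w, if x u = i then μ x else 0)
    (A : ℝ)
    (hcoupling : ∀ (u : V) (i j : Q u),
      ∃ π : (∀ v, Q v) × (∀ v, Q v) → ℝ,
        (∀ z, 0 ≤ π z) ∧
        (∀ x : ∀ v, Q v, ∑ y : ∀ v, Q v, π (x, y) =
          (if x u = i then μ x else 0) /
            (∑ x' : ∀ w, Q w, if x' u = i then μ x' else 0)) ∧
        (∀ y : ∀ v, Q v, ∑ x : ∀ v, Q v, π (x, y) =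
          (if y u = j then μ y else 0) /
            (∑ y' : ∀ w, Q w, if y' u = j then μ y' else 0)) ∧
        (∑ z : (∀ v, Q v) × (∀ v, Q v),
            π z * ((Finset.univ.filter fun v => z.1 v ≠ z.2 v).card : ℝ)) ≤ A) :
    ∀ u : V, (∑ v : V, ⨆ i : Q u, ⨆ j : Q u,
        dTV (condMarg μ u i v) (condMarg μ u j v)) ≤
      ((Finset.univ.sup fun v : V => Fintype.card (Q v) : ℕ) : ℝ) ^ 2 * A := by
  intro u
  have hQu : Nonempty (Q u) := Fintype.card_pos_iff.mp (by have := hcard u; omega)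
  have hdnn : ∀ (v : V) (i j : Q u), 0 ≤ dTV (condMarg μ u i v) (condMarg μ u j v) := by
    intro v i j
    unfold dTV
    positivity
  -- key claim: for fixed i j, the sum over v of dTV is at most A
  have key : ∀ i j : Q u, (∑ v, dTV (condMarg μ u i v) (condMarg μ u j v)) ≤ A := by
    intro i j
    obtain ⟨π, hπnn, hmx, hmy, hE⟩ := hcoupling u i j
    have habs : ∀ (v : V) (b c : Q v),
        (∑ a : Q v, |(if b = a then (1:ℝ) else 0) - (if c = a then 1 else 0)|) =
        if b = c then 0 else 2 := by
      intro v b c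
      by_cases h : b = c
      · simp [h]
      · rw [if_neg h]
        have h1 : ∀ a : Q v, |(if b = a then (1:ℝ) else 0) - (if c = a then 1 else 0)| =
            (if b = a then (1:ℝ) else 0) + (if c = a then 1 else 0) := by
          intro a
          by_cases hb : b = a <;> by_cases hc : c = a
          · exact absurd (hb.trans hc.symm) h
          · simp [hb, hc]
          · simp [hb, hc]
          · simp [hb, hc]
        rw [Finset.sum_congr rfl fun a _ => h1 a, Finset.sum_add_distrib]
        simp
        norm_num
    have hstep : ∀ v : V, dTV (condMarg μ u i v) (condMarg μ u j v) ≤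
        ∑ z : (∀ w, Q w) × (∀ w, Q w), π z * (if z.1 v = z.2 v then 0 else 1) := by
      intro v
      have hf : ∀ a : Q v, condMarg μ u i v a =
          ∑ z : (∀ w, Q w) × (∀ w, Q w), π z * (if z.1 v = a then 1 else 0) := by
        intro a
        rw [Fintype.sum_prod_type]
        have : ∀ x : ∀ w, Q w,
            (∑ y : ∀ w, Q w, π (x, y) * (if x v = a then (1:ℝ) else 0)) =
            (if x u = i ∧ x v = a then μ x else 0) /
              (∑ x' : ∀ w, Q w, if x' u = i then μ x' else 0) := by
          intro x
          rw [← Finset.sum_mul, hmx x]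
          by_cases h1 : x u = i <;> by_cases h2 : x v = a <;> simp [h1, h2]
        rw [Finset.sum_congr rfl fun x _ => this x]
        unfold condMarg
        rw [Finset.sum_div]
        exact Finset.sum_congr rfl fun x _ => by
          by_cases h : x u = i ∧ x v = a <;> simp [h] <;> congr!
      have hg : ∀ a : Q v, condMarg μ u j v a =
          ∑ z : (∀ w, Q w) × (∀ w, Q w), π z * (if z.2 v = a then 1 else 0) := by
        intro a
        rw [Fintype.sum_prod_type, Finset.sum_comm]
        have : ∀ y : ∀ w, Q w,
            (∑ x : ∀ w, Q w, π (x, y) * (if y v = a then (1:ℝ) else 0)) =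
            (if y u = j ∧ y v = a then μ y else 0) /
              (∑ y' : ∀ w, Q w, if y' u = j then μ y' else 0) := by
          intro y
          rw [← Finset.sum_mul, hmy y]
          by_cases h1 : y u = j <;> by_cases h2 : y v = a <;> simp [h1, h2]
        rw [Finset.sum_congr rfl fun y _ => this y]
        unfold condMarg
        rw [Finset.sum_div]
        exact Finset.sum_congr rfl fun x _ => by
          by_cases h : x u = j ∧ x v = a <;> simp [h] <;> congr!
      unfold dTV
      have hrw : ∀ a : Q v, condMarg μ u i v a - condMarg μ u j v a =
          ∑ z : (∀ w, Q w) × (∀ w, Q w),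
            π z * ((if z.1 v = a then (1:ℝ) else 0) - (if z.2 v = a then 1 else 0)) := by
        intro a
        rw [hf a, hg a, ← Finset.sum_sub_distrib]
        exact Finset.sum_congr rfl fun z _ => by ring
      calc 2⁻¹ * ∑ a : Q v, |condMarg μ u i v a - condMarg μ u j v a|
          ≤ 2⁻¹ * ∑ a : Q v, ∑ z : (∀ w, Q w) × (∀ w, Q w),
              π z * |(if z.1 v = a then (1:ℝ) else 0) - (if z.2 v = a then 1 else 0)| := by
            apply mul_le_mul_of_nonneg_left _ (by norm_num)
            apply Finset.sum_le_sum
            intro a _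
            rw [hrw a]
            refine le_trans (Finset.abs_sum_le_sum_abs _ _) ?_
            apply Finset.sum_le_sum
            intro z _
            rw [abs_mul, abs_of_nonneg (hπnn z)]
        _ = 2⁻¹ * ∑ z : (∀ w, Q w) × (∀ w, Q w),
              π z * (if z.1 v = z.2 v then 0 else 2) := by
            rw [Finset.sum_comm]
            congr 1
            refine Finset.sum_congr rfl fun z _ => ?_
            rw [← Finset.mul_sum, habs v (z.1 v) (z.2 v)]
        _ = ∑ z : (∀ w, Q w) × (∀ w, Q w), π z * (if z.1 v = z.2 v then 0 else 1) := by
            rw [Finset.mul_sum]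
            refine Finset.sum_congr rfl fun z _ => ?_
            by_cases h : z.1 v = z.2 v <;> simp [h] <;> ring
    calc (∑ v, dTV (condMarg μ u i v) (condMarg μ u j v))
        ≤ ∑ v, ∑ z : (∀ w, Q w) × (∀ w, Q w), π z * (if z.1 v = z.2 v then 0 else 1) :=
          Finset.sum_le_sum fun v _ => hstep v
      _ = ∑ z : (∀ w, Q w) × (∀ w, Q w),
            π z * ((Finset.univ.filter fun v => z.1 v ≠ z.2 v).card : ℝ) := by
          rw [Finset.sum_comm]
          refine Finset.sum_congr rfl fun z _ => ?_
          rw [← Finset.mul_sum]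
          congr 1
          rw [Finset.card_filter]
          push_cast
          refine Finset.sum_congr rfl fun v _ => ?_
          by_cases h : z.1 v = z.2 v <;> simp [h]
      _ ≤ A := hE
  have hA : 0 ≤ A := by
    obtain ⟨i⟩ := hQu
    exact le_trans (Finset.sum_nonneg fun v _ => hdnn v i i) (key i i)
  -- bound the sup by the double sum
  have hsup : ∀ v : V, (⨆ i : Q u, ⨆ j : Q u,
      dTV (condMarg μ u i v) (condMarg μ u j v)) ≤
      ∑ i : Q u, ∑ j : Q u, dTV (condMarg μ u i v) (condMarg μ u j v) := by
    intro v
    refine ciSup_le fun i => ?_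
    refine le_trans (ciSup_le fun j => Finset.single_le_sum
      (fun j' _ => hdnn v i j') (Finset.mem_univ j)) ?_
    exact Finset.single_le_sum
      (fun i' _ => Finset.sum_nonneg fun j' _ => hdnn v i' j') (Finset.mem_univ i)
  calc (∑ v : V, ⨆ i : Q u, ⨆ j : Q u, dTV (condMarg μ u i v) (condMarg μ u j v))
      ≤ ∑ v : V, ∑ i : Q u, ∑ j : Q u, dTV (condMarg μ u i v) (condMarg μ u j v) :=
        Finset.sum_le_sum fun v _ => hsup v
    _ = ∑ i : Q u, ∑ j : Q u, ∑ v : V, dTV (condMarg μ u i v) (condMarg μ u j v) := by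
        rw [Finset.sum_comm]
        exact Finset.sum_congr rfl fun i _ => Finset.sum_comm
    _ ≤ ∑ _i : Q u, ∑ _j : Q u, A :=
        Finset.sum_le_sum fun i _ => Finset.sum_le_sum fun j _ => key i j
    _ = (Fintype.card (Q u) : ℝ) ^ 2 * A := by
        simp [Finset.sum_const, nsmul_eq_mul]
        ring
    _ ≤ ((Finset.univ.sup fun v : V => Fintype.card (Q v) : ℕ) : ℝ) ^ 2 * A := by
        have hle : (Fintype.card (Q u) : ℝ) ≤
            ((Finset.univ.sup fun v : V => Fintype.card (Q v) : ℕ) : ℝ) :=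
          Nat.cast_le.mpr (Finset.le_sup (f := fun v => Fintype.card (Q v)) (Finset.mem_univ u))
        have h0 : (0:ℝ) ≤ (Fintype.card (Q u) : ℝ) := Nat.cast_nonneg _
        exact mul_le_mul_of_nonneg_right (pow_le_pow_left₀ h0 hle 2) hA
end

section
/- Under the LLL condition with x(c) = e·p for all c and e·p·(D+1) ≤ 1: for any event E depending on a set vbl(E) of variables that intersects the variable sets of at most m of the constraints, the conditional probability satisfies Pr[E | all A_c avoided] ≤ Pr[E] · (1 − e·p)^{-m}. -/
open Classical in
/-- Probability of a set `S` of assignments under the product distribution with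
single-variable weights `w`. -/
noncomputable def prodPr {V : Type*} [Fintype V] {Q : V → Type*}
    [∀ v, Fintype (Q v)] (w : ∀ v, Q v → ℝ) (S : Set (∀ v, Q v)) : ℝ :=
  ∑ x : ∀ v, Q v, if x ∈ S then ∏ v : V, w v (x v) else 0

/-!
Put `q = e·p`; the condition `e·p·(D+1) ≤ 1` gives `p ≤ q(1-q)^D`. Let `avoid A S` be the event
that every `A c` with `c ∈ S` is avoided. The LLL induction on `S` shows
`Pr[A c ∩ avoid A S] ≤ q·Pr[avoid A S]`: split `S` into the constraints near `c` (sharing a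
variable with it, at most `D` of them) and the far ones. `A c` is independent of the far part,
and adding the near constraints back one at a time costs a factor `1 - q` each (by the induction
hypothesis), which `p ≤ q(1-q)^D` absorbs. The same splitting with `E` in place of `A c` gives
`(1-q)^k·Pr[E ∩ avoid A S] ≤ Pr[E]·Pr[avoid A S]`, where `k ≤ m` counts the constraints near
`vbl(E)`.
-/

theorem preimage_image_eq_of_dependsOn {ι β : Type*} {α : ι → Type*} {S : Set (∀ i, α i)}
    {s : Set ι} (hS : DependsOn (· ∈ S) s) {g : (∀ i, α i) → β}
    (hg : ∀ x y, g x = g y → ∀ i ∈ s, x i = y i) : g ⁻¹' (g '' S) = S :=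
  (Set.subset_preimage_image g S).antisymm' fun x ⟨y, hy, hyx⟩ => cast (hS (hg y x hyx)) hy

theorem Real.exp_neg_one_le_one_sub_pow {q : ℝ} {D : ℕ} (hq : q * (D + 1) ≤ 1) :
    Real.exp (-1) ≤ (1 - q) ^ D := by
  rcases D.eq_zero_or_pos with rfl | hD
  · simp
  have hD' : (0 : ℝ) < D := by exact_mod_cast hD
  have hq' : (1 + (D : ℝ)⁻¹)⁻¹ ≤ 1 - q := by
    have : q ≤ 1 / (D + 1) := by rw [le_div_iff₀ (by positivity)]; exact hq
    rw [show (1 + (D : ℝ)⁻¹)⁻¹ = 1 - 1 / (D + 1) by field_simp; ring]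
    linarith
  calc Real.exp (-1) = (Real.exp 1)⁻¹ := Real.exp_neg 1
    _ ≤ ((1 + (D : ℝ)⁻¹) ^ D)⁻¹ := inv_anti₀ (by positivity) Real.one_add_inv_pow_le_exp
    _ = (1 + (D : ℝ)⁻¹)⁻¹ ^ D := (inv_pow _ _).symm
    _ ≤ (1 - q) ^ D := pow_le_pow_left₀ (by positivity) hq' D

theorem Real.le_exp_one_mul_mul_one_sub_pow {p : ℝ} {D : ℕ} (hp : 0 ≤ p)
    (h : Real.exp 1 * p * (D + 1) ≤ 1) : p ≤ Real.exp 1 * p * (1 - Real.exp 1 * p) ^ D :=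
  calc p = Real.exp 1 * p * Real.exp (-1) := by rw [Real.exp_neg]; field_simp
    _ ≤ Real.exp 1 * p * (1 - Real.exp 1 * p) ^ D :=
      mul_le_mul_of_nonneg_left (Real.exp_neg_one_le_one_sub_pow h) (by positivity)

section ProductWeight

variable {V : Type*} [Fintype V] {Q : V → Type*} [∀ v, Fintype (Q v)] {w : ∀ v, Q v → ℝ}

theorem prodPr_univ (hw1 : ∀ v, ∑ x : Q v, w v x = 1) : prodPr w Set.univ = 1 := by
  classical
  simp [prodPr, ← Fintype.prod_sum, hw1]

theorem prodPr_empty : prodPr w (∅ : Set (∀ v, Q v)) = 0 := by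
  simp [prodPr]

theorem prodPr_nonneg (hw : ∀ v x, 0 ≤ w v x) (S : Set (∀ v, Q v)) : 0 ≤ prodPr w S := by
  classical
  exact Finset.sum_nonneg fun _ _ => ite_nonneg (Finset.prod_nonneg fun v _ => hw v _) le_rfl

theorem prodPr_mono (hw : ∀ v x, 0 ≤ w v x) {S T : Set (∀ v, Q v)} (h : S ⊆ T) :
    prodPr w S ≤ prodPr w T := by
  classical
  refine Finset.sum_le_sum fun x _ => ?_
  by_cases hx : x ∈ S
  · simp [hx, h hx]
  · simpa [hx] using ite_nonneg (Finset.prod_nonneg fun v _ => hw v _) le_rfl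

theorem prodPr_inter_add_inter_compl (S T : Set (∀ v, Q v)) :
    prodPr w (S ∩ T) + prodPr w (S ∩ Tᶜ) = prodPr w S := by
  classical
  rw [prodPr, prodPr, prodPr, ← Finset.sum_add_distrib]
  refine Finset.sum_congr rfl fun x _ => ?_
  by_cases hS : x ∈ S <;> by_cases hT : x ∈ T <;> simp [hS, hT]

theorem one_sub_mul_le_prodPr_inter_compl {q : ℝ} {S T : Set (∀ v, Q v)}
    (h : prodPr w (T ∩ S) ≤ q * prodPr w S) : (1 - q) * prodPr w S ≤ prodPr w (S ∩ Tᶜ) := by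
  have := prodPr_inter_add_inter_compl (w := w) S T
  rw [Set.inter_comm] at h
  linarith

open Classical in
theorem prodPr_preimage_inter_preimage (s : Set V) (SA : Set (∀ v : s, Q v))
    (SB : Set (∀ v : {v // v ∉ s}, Q v)) :
    prodPr w ((fun x (v : s) => x v) ⁻¹' SA ∩ (fun x (v : {v // v ∉ s}) => x v) ⁻¹' SB) =
      prodPr (fun v : s => w v) SA * prodPr (fun v : {v // v ∉ s} => w v) SB := by
  unfold prodPr
  rw [Finset.sum_mul_sum, ← Finset.sum_product']
  refine Finset.sum_equiv (Equiv.piEquivPiSubtypeProd (· ∈ s) Q) (by simp) fun x _ => ?_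
  rw [ite_zero_mul_ite_zero, ← Fintype.prod_subtype_mul_prod_subtype (· ∈ s)]
  congr 1

open Classical in
theorem prodPr_inter_of_dependsOn (hw1 : ∀ v, ∑ x : Q v, w v x = 1) {S T : Set (∀ v, Q v)}
    {s : Set V} (hS : DependsOn (· ∈ S) s) (hT : DependsOn (· ∈ T) sᶜ) :
    prodPr w (S ∩ T) = prodPr w S * prodPr w T := by
  set SA := (fun x (v : s) => x v) '' S
  set SB := (fun x (v : {v // v ∉ s}) => x v) '' T
  have hS' : (fun x (v : s) => x v) ⁻¹' SA = S :=
    preimage_image_eq_of_dependsOn hS fun x y h v hv => congrFun h ⟨v, hv⟩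
  have hT' : (fun x (v : {v // v ∉ s}) => x v) ⁻¹' SB = T :=
    preimage_image_eq_of_dependsOn hT fun x y h v hv => congrFun h ⟨v, hv⟩
  have hST := prodPr_preimage_inter_preimage (w := w) s SA SB
  have hS1 := prodPr_preimage_inter_preimage (w := w) s SA Set.univ
  have hT1 := prodPr_preimage_inter_preimage (w := w) s Set.univ SB
  simp only [Set.preimage_univ, Set.inter_univ, Set.univ_inter, hS', hT',
    prodPr_univ (w := fun v : s => w v) fun v => hw1 v,
    prodPr_univ (w := fun v : {v // v ∉ s} => w v) fun v => hw1 v, mul_one, one_mul] at hST hS1 hT1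
  rw [hST, hS1, hT1]

end ProductWeight

namespace LLL

open Finset

variable {Ω C : Type*}

def avoid (A : C → Set Ω) (S : Finset C) : Set Ω := ⋂ c ∈ S, (A c)ᶜ

theorem avoid_univ [Fintype C] (A : C → Set Ω) : avoid A univ = ⋂ c, (A c)ᶜ := by
  simp [avoid]

theorem avoid_insert [DecidableEq C] (A : C → Set Ω) (c : C) (S : Finset C) :
    avoid A (insert c S) = avoid A S ∩ (A c)ᶜ := by
  rw [avoid, set_biInter_insert, Set.inter_comm, avoid]

theorem avoid_anti (A : C → Set Ω) {S T : Finset C} (h : S ⊆ T) : avoid A T ⊆ avoid A S :=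
  Set.biInter_subset_biInter_left h

theorem inter_avoid_eq_empty {A : C → Set Ω} {S : Finset C} {c : C} (hc : c ∈ S) :
    A c ∩ avoid A S = ∅ :=
  Set.eq_empty_iff_forall_notMem.2 fun _ ⟨hx, hxS⟩ => Set.mem_iInter₂.1 hxS c hc hx

theorem dependsOn_mem_avoid {ι : Type*} {α : ι → Type*} {A : C → Set (∀ i, α i)} {S : Finset C}
    {s : Set ι} (h : ∀ c ∈ S, DependsOn (· ∈ A c) s) : DependsOn (· ∈ avoid A S) s := by
  intro x y hxy
  simp only [avoid, Set.mem_iInter, Set.mem_compl_iff, eq_iff_iff]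
  exact forall₂_congr fun c hc => not_congr (eq_iff_iff.1 (h c hc hxy))

section Near

variable {V : Type*} [DecidableEq V]

def near (vbl : C → Finset V) (s : Finset V) (S : Finset C) : Finset C :=
  S.filter fun c => (vbl c ∩ s).Nonempty

def far (vbl : C → Finset V) (s : Finset V) (S : Finset C) : Finset C :=
  S.filter fun c => ¬ (vbl c ∩ s).Nonempty

variable {vbl : C → Finset V} {s : Finset V} {S : Finset C}

theorem far_union_near [DecidableEq C] : far vbl s S ∪ near vbl s S = S := by
  rw [union_comm]
  exact filter_union_filter_not_eq _ S

theorem near_subset : near vbl s S ⊆ S := filter_subset _ S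

theorem far_subset : far vbl s S ⊆ S := filter_subset _ S

theorem notMem_far_of_mem_near {c : C} (hc : c ∈ near vbl s S) : c ∉ far vbl s S :=
  fun h => (mem_filter.1 h).2 (mem_filter.1 hc).2

theorem dependsOn_mem_avoid_far {Q : V → Type*} {A : C → Set (∀ v, Q v)}
    (hA : ∀ c, DependsOn (· ∈ A c) (vbl c : Set V)) :
    DependsOn (· ∈ avoid A (far vbl s S)) (s : Set V)ᶜ :=
  dependsOn_mem_avoid fun c hc => (hA c).mono fun v hv hvs =>
    (mem_filter.1 hc).2 ⟨v, mem_inter.2 ⟨hv, hvs⟩⟩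

theorem card_near_le [Finite C] {D : ℕ} {c : C} (hcS : c ∉ S)
    (hD : Set.ncard {c' : C | c' ≠ c ∧ (vbl c ∩ vbl c').Nonempty} ≤ D) :
    (near vbl (vbl c) S).card ≤ D := by
  rw [← Set.ncard_coe_finset]
  refine (Set.ncard_le_ncard (fun c' hc' => ?_) (Set.toFinite _)).trans hD
  obtain ⟨hc'S, hc'c⟩ := mem_filter.1 hc'
  exact ⟨fun h => hcS (h ▸ hc'S), inter_comm (vbl c') (vbl c) ▸ hc'c⟩

end Near

section Constraints

variable {V : Type*} [Fintype V] {Q : V → Type*} [∀ v, Fintype (Q v)]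
  {w : ∀ v, Q v → ℝ} {A : C → Set (∀ v, Q v)} {q : ℝ}

theorem pow_mul_prodPr_avoid_le [DecidableEq C] (hq1 : q ≤ 1) (B M : Finset C)
    (h : ∀ a ∈ M, ∀ M' ⊆ M.erase a,
      prodPr w (A a ∩ avoid A (B ∪ M')) ≤ q * prodPr w (avoid A (B ∪ M'))) :
    (1 - q) ^ M.card * prodPr w (avoid A B) ≤ prodPr w (avoid A (B ∪ M)) := by
  induction M using Finset.induction_on with
  | empty => simp
  | insert a M ha ih =>
    have hM : ∀ b ∈ M, ∀ M' ⊆ M.erase b,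
        prodPr w (A b ∩ avoid A (B ∪ M')) ≤ q * prodPr w (avoid A (B ∪ M')) :=
      fun b hb M' hM' => h b (mem_insert_of_mem hb) M'
        (hM'.trans (erase_subset_erase _ (subset_insert _ _)))
    have ha' := h a (mem_insert_self a M) M (by rw [erase_insert ha])
    calc (1 - q) ^ (insert a M).card * prodPr w (avoid A B)
        = (1 - q) * ((1 - q) ^ M.card * prodPr w (avoid A B)) := by
          rw [card_insert_of_notMem ha]; ring
      _ ≤ (1 - q) * prodPr w (avoid A (B ∪ M)) :=
          mul_le_mul_of_nonneg_left (ih hM) (sub_nonneg.2 hq1)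
      _ ≤ prodPr w (avoid A (B ∪ insert a M)) := by
          rw [union_insert, avoid_insert]
          exact one_sub_mul_le_prodPr_inter_compl ha'

variable [DecidableEq V] {vbl : C → Finset V}

theorem pow_mul_prodPr_avoid_far_le (hq1 : q ≤ 1) (S : Finset C) (s : Finset V)
    (h : ∀ T ⊂ S, ∀ a, prodPr w (A a ∩ avoid A T) ≤ q * prodPr w (avoid A T)) :
    (1 - q) ^ (near vbl s S).card * prodPr w (avoid A (far vbl s S)) ≤ prodPr w (avoid A S) := by
  classical
  conv_rhs => rw [← far_union_near (vbl := vbl) (s := s) (S := S)]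
  refine pow_mul_prodPr_avoid_le hq1 _ _ fun a ha M' hM' => h _ ?_ a
  have hM'S : M' ⊆ S := (hM'.trans (erase_subset _ _)).trans near_subset
  refine (ssubset_iff_of_subset (union_subset far_subset hM'S)).2 ⟨a, near_subset ha, ?_⟩
  rw [mem_union, not_or]
  exact ⟨notMem_far_of_mem_near ha, fun haM' => notMem_erase a _ (hM' haM')⟩

theorem prodPr_inter_avoid_le_mul_avoid_far (hw : ∀ v x, 0 ≤ w v x)
    (hw1 : ∀ v, ∑ x : Q v, w v x = 1) (hA : ∀ c, DependsOn (· ∈ A c) (vbl c : Set V))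
    (S : Finset C) {s : Finset V} {E : Set (∀ v, Q v)} (hE : DependsOn (· ∈ E) (s : Set V)) :
    prodPr w (E ∩ avoid A S) ≤ prodPr w E * prodPr w (avoid A (far vbl s S)) := by
  rw [← prodPr_inter_of_dependsOn hw1 hE (dependsOn_mem_avoid_far hA)]
  exact prodPr_mono hw (Set.inter_subset_inter_right _ (avoid_anti A far_subset))

variable [Finite C] {p : ℝ} {D : ℕ}

theorem prodPr_inter_avoid_le (hw : ∀ v x, 0 ≤ w v x) (hw1 : ∀ v, ∑ x : Q v, w v x = 1)
    (hA : ∀ c, DependsOn (· ∈ A c) (vbl c : Set V)) (hq0 : 0 ≤ q) (hq1 : q ≤ 1)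
    (hp : ∀ c, prodPr w (A c) ≤ p)
    (hD : ∀ c : C, Set.ncard {c' : C | c' ≠ c ∧ (vbl c ∩ vbl c').Nonempty} ≤ D)
    (hqD : p ≤ q * (1 - q) ^ D) (S : Finset C) (c : C) :
    prodPr w (A c ∩ avoid A S) ≤ q * prodPr w (avoid A S) := by
  induction S using Finset.strongInduction generalizing c with
  | H S ih =>
  by_cases hcS : c ∈ S
  · rw [inter_avoid_eq_empty hcS, prodPr_empty]
    exact mul_nonneg hq0 (prodPr_nonneg hw _)
  have hfar := prodPr_nonneg hw (avoid A (far vbl (vbl c) S))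
  calc prodPr w (A c ∩ avoid A S)
      ≤ prodPr w (A c) * prodPr w (avoid A (far vbl (vbl c) S)) :=
        prodPr_inter_avoid_le_mul_avoid_far hw hw1 hA S (hA c)
    _ ≤ q * (1 - q) ^ (near vbl (vbl c) S).card * prodPr w (avoid A (far vbl (vbl c) S)) := by
        refine mul_le_mul_of_nonneg_right ((hp c).trans (hqD.trans ?_)) hfar
        exact mul_le_mul_of_nonneg_left
          (pow_le_pow_of_le_one (sub_nonneg.2 hq1) (by linarith) (card_near_le hcS (hD c))) hq0
    _ ≤ q * prodPr w (avoid A S) := by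
        rw [mul_assoc]
        exact mul_le_mul_of_nonneg_left
          (pow_mul_prodPr_avoid_far_le hq1 S (vbl c) ih) hq0

theorem pow_mul_prodPr_inter_avoid_le (hw : ∀ v x, 0 ≤ w v x) (hw1 : ∀ v, ∑ x : Q v, w v x = 1)
    (hA : ∀ c, DependsOn (· ∈ A c) (vbl c : Set V)) (hq0 : 0 ≤ q) (hq1 : q ≤ 1)
    (hp : ∀ c, prodPr w (A c) ≤ p)
    (hD : ∀ c : C, Set.ncard {c' : C | c' ≠ c ∧ (vbl c ∩ vbl c').Nonempty} ≤ D)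
    (hqD : p ≤ q * (1 - q) ^ D) {E : Set (∀ v, Q v)} {s : Finset V}
    (hE : DependsOn (· ∈ E) (s : Set V)) (S : Finset C) :
    (1 - q) ^ (near vbl s S).card * prodPr w (E ∩ avoid A S) ≤
      prodPr w E * prodPr w (avoid A S) :=
  calc (1 - q) ^ (near vbl s S).card * prodPr w (E ∩ avoid A S)
      ≤ (1 - q) ^ (near vbl s S).card * (prodPr w E * prodPr w (avoid A (far vbl s S))) :=
        mul_le_mul_of_nonneg_left (prodPr_inter_avoid_le_mul_avoid_far hw hw1 hA S hE)
          (pow_nonneg (sub_nonneg.2 hq1) _)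
    _ = prodPr w E * ((1 - q) ^ (near vbl s S).card * prodPr w (avoid A (far vbl s S))) := by
        ring
    _ ≤ prodPr w E * prodPr w (avoid A S) :=
        mul_le_mul_of_nonneg_left (pow_mul_prodPr_avoid_far_le hq1 S s fun T _ a =>
          prodPr_inter_avoid_le hw hw1 hA hq0 hq1 hp hD hqD T a) (prodPr_nonneg hw E)

theorem prodPr_inter_avoid_div_le (hw : ∀ v x, 0 ≤ w v x) (hw1 : ∀ v, ∑ x : Q v, w v x = 1)
    (hA : ∀ c, DependsOn (· ∈ A c) (vbl c : Set V)) (hq0 : 0 ≤ q) (hq1 : q < 1)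
    (hp : ∀ c, prodPr w (A c) ≤ p)
    (hD : ∀ c : C, Set.ncard {c' : C | c' ≠ c ∧ (vbl c ∩ vbl c').Nonempty} ≤ D)
    (hqD : p ≤ q * (1 - q) ^ D) {E : Set (∀ v, Q v)} {s : Finset V}
    (hE : DependsOn (· ∈ E) (s : Set V)) {S : Finset C} {m : ℕ} (hm : (near vbl s S).card ≤ m) :
    prodPr w (E ∩ avoid A S) / prodPr w (avoid A S) ≤ prodPr w E * ((1 - q) ^ m)⁻¹ := by
  have hpow : 0 < (1 - q) ^ m := pow_pos (sub_pos.2 hq1) m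
  refine div_le_of_le_mul₀ (prodPr_nonneg hw _)
    (mul_nonneg (prodPr_nonneg hw E) (inv_nonneg.2 hpow.le)) ?_
  rw [mul_right_comm, ← div_eq_mul_inv, le_div_iff₀ hpow, mul_comm]
  calc (1 - q) ^ m * prodPr w (E ∩ avoid A S)
      ≤ (1 - q) ^ (near vbl s S).card * prodPr w (E ∩ avoid A S) :=
        mul_le_mul_of_nonneg_right (pow_le_pow_of_le_one (sub_nonneg.2 hq1.le) (by linarith) hm)
          (prodPr_nonneg hw _)
    _ ≤ prodPr w E * prodPr w (avoid A S) :=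
        pow_mul_prodPr_inter_avoid_le hw hw1 hA hq0 hq1.le hp hD hqD hE S

end Constraints

end LLL

/-- Haeupler–Saha–Srinivasan bound specialized to uniform weights `x(c) = e·p`:
under `e·p·(D+1) ≤ 1`, for any event `E` determined by variables intersecting at
most `m` constraints, `Pr[E | ∧ ¬A_c] ≤ Pr[E]·(1−e·p)^{−m}`. -/
theorem stmt18 {V : Type*} [Fintype V] [DecidableEq V] {Q : V → Type*}
    [∀ v, Fintype (Q v)] {C : Type*} [Fintype C]
    (w : ∀ v, Q v → ℝ) (hw : ∀ v x, 0 ≤ w v x) (hw1 : ∀ v, ∑ x : Q v, w v x = 1)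
    (A : C → Set (∀ v, Q v)) (vbl : C → Finset V)
    (hdet : ∀ c, ∀ x y : ∀ v, Q v, (∀ v ∈ vbl c, x v = y v) → (x ∈ A c ↔ y ∈ A c))
    (E : Set (∀ v, Q v)) (vblE : Finset V)
    (hdetE : ∀ x y : ∀ v, Q v, (∀ v ∈ vblE, x v = y v) → (x ∈ E ↔ y ∈ E))
    (p : ℝ) (hp0 : 0 < p) (hp : ∀ c, prodPr w (A c) ≤ p)
    (D : ℕ) (hD1 : 1 ≤ D)
    (hD : ∀ c : C, Set.ncard {c' : C | c' ≠ c ∧ (vbl c ∩ vbl c').Nonempty} ≤ D)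
    (hcond : Real.exp 1 * p * ((D : ℝ) + 1) ≤ 1)
    (m : ℕ) (hm : Set.ncard {c : C | (vbl c ∩ vblE).Nonempty} ≤ m) :
    prodPr w (E ∩ ⋂ c : C, (A c)ᶜ) / prodPr w (⋂ c : C, (A c)ᶜ) ≤
      prodPr w E * ((1 - Real.exp 1 * p) ^ m)⁻¹ := by
  have hq0 : 0 ≤ Real.exp 1 * p := by positivity
  have hq1 : Real.exp 1 * p < 1 := by
    have : (1 : ℝ) ≤ D := by exact_mod_cast hD1
    nlinarith
  have hk : (LLL.near vbl vblE Finset.univ).card ≤ m := by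
    simpa [LLL.near, ← Set.ncard_coe_finset] using hm
  simpa only [LLL.avoid_univ] using LLL.prodPr_inter_avoid_div_le hw hw1
    (fun c x y h => propext (hdet c x y h)) hq0 hq1 hp hD
    (Real.le_exp_one_mul_mul_one_sub_pow hp0.le hcond) (fun x y h => propext (hdetE x y h)) hk
end
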